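/- If m = 3 and q = (α, β, γ) ∈ [1,2]³ with 1/α + 1/β + 1/γ = 2, then any constant C satisfying (Σ_{j₁}(Σ_{j₂}(Σ_{j₃}|T(e_{j₁},e_{j₂},e_{j₃})|^γ)^{β/γ})^{α/β})^{1/α} ≤ C‖T‖ for all real trilinear forms T on (ℓ∞ⁿ)³ and all n satisfies C ≥ 2^{(2βγ + αβ + αγ - 2αβγ)/(αβγ)}. -/

import Mathlib

/-- The canonical basis vectors of `ℝⁿ`. -/
def e (n : ℕ) (j : Fin n) : Fin n → ℝ := fun i => if i = j then 1 else 0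

/-- The supremum norm of an `m`-linear form on `(ℓ∞ⁿ)^m`. -/
noncomputable def supNorm (m n : ℕ)
    (T : MultilinearMap ℝ (fun _ : Fin m => (Fin n → ℝ)) ℝ) : ℝ :=
  sSup {v : ℝ | ∃ x : Fin m → Fin n → ℝ, (∀ i, ‖x i‖ ≤ 1) ∧ v = |T x|}

/-! The lower bound is witnessed by a single form on `(ℓ∞⁴)³`,
`T₃(x, y, z) = (z₀ + z₁) B(x₀, x₁, y₀, y₁) + (z₀ - z₁) B(x₂, x₃, y₂, y₃)` with
`B(s, t, u, v) = s (u + v) + t (u - v)`. Since `|u + v| + |u - v| ≤ 2` on the unit square,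
`‖T₃‖ ≤ 4`, while the coefficients of `T₃` are sixteen signs, supported where `j₃ < 2` and
`j₁, j₂` lie in the same half of `Fin 4`. Its mixed norm is therefore `2^(2/α + 1/β + 1/γ)`, and
comparing with `C ‖T₃‖ ≤ 4 C` gives the bound. -/

open Finset

noncomputable section

def mixedNorm3 (α β γ : ℝ) {n : ℕ}
    (T : MultilinearMap ℝ (fun _ : Fin 3 => (Fin n → ℝ)) ℝ) : ℝ :=
  (∑ j₁ : Fin n, (∑ j₂ : Fin n, (∑ j₃ : Fin n,
    |T ![e n j₁, e n j₂, e n j₃]| ^ γ) ^ (β / γ)) ^ (α / β)) ^ (1 / α)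

section supNorm

variable {m n : ℕ} (T : MultilinearMap ℝ (fun _ : Fin m => (Fin n → ℝ)) ℝ)

lemma supNorm_nonneg : 0 ≤ supNorm m n T :=
  Real.sSup_nonneg <| by rintro v ⟨x, -, rfl⟩; exact abs_nonneg _

lemma supNorm_le {M : ℝ} (h : ∀ x : Fin m → Fin n → ℝ, (∀ i, ‖x i‖ ≤ 1) → |T x| ≤ M) :
    supNorm m n T ≤ M :=
  csSup_le ⟨_, 0, fun i => by simp, rfl⟩ <| by rintro v ⟨x, hx, rfl⟩; exact h x hx

end supNorm

lemma abs_add_add_abs_sub_le_two {u v : ℝ} (hu : |u| ≤ 1) (hv : |v| ≤ 1) :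
    |u + v| + |u - v| ≤ 2 := by
  rw [abs_le] at hu hv
  rcases abs_cases (u + v) with ⟨h₁, -⟩ | ⟨h₁, -⟩ <;>
    rcases abs_cases (u - v) with ⟨h₂, -⟩ | ⟨h₂, -⟩ <;> linarith

lemma abs_mul_add_add_mul_sub_le {s t u v K : ℝ} (hs : |s| ≤ K) (ht : |t| ≤ K)
    (hu : |u| ≤ 1) (hv : |v| ≤ 1) : |s * (u + v) + t * (u - v)| ≤ 2 * K :=
  calc |s * (u + v) + t * (u - v)| ≤ |s| * |u + v| + |t| * |u - v| := by
        rw [← abs_mul, ← abs_mul]; exact abs_add_le _ _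
    _ ≤ K * |u + v| + K * |u - v| := by gcongr
    _ = K * (|u + v| + |u - v|) := by ring
    _ ≤ K * 2 := by
        gcongr
        · exact (abs_nonneg s).trans hs
        · exact abs_add_add_abs_sub_le_two hu hv
    _ = 2 * K := mul_comm _ _

def coordMonomial {n : ℕ} (a b c : Fin n) :
    MultilinearMap ℝ (fun _ : Fin 3 => (Fin n → ℝ)) ℝ :=
  (MultilinearMap.mkPiAlgebra ℝ (Fin 3) ℝ).compLinearMap
    fun i => LinearMap.proj (![a, b, c] i)

lemma coordMonomial_apply {n : ℕ} (a b c : Fin n) (x : Fin 3 → Fin n → ℝ) :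
    coordMonomial a b c x = x 0 a * x 1 b * x 2 c := by
  simp [coordMonomial, Fin.prod_univ_three]

def T₃ : MultilinearMap ℝ (fun _ : Fin 3 => (Fin 4 → ℝ)) ℝ :=
  coordMonomial 0 0 0 + coordMonomial 0 1 0 + coordMonomial 1 0 0 - coordMonomial 1 1 0
  + coordMonomial 0 0 1 + coordMonomial 0 1 1 + coordMonomial 1 0 1 - coordMonomial 1 1 1
  + coordMonomial 2 2 0 + coordMonomial 2 3 0 + coordMonomial 3 2 0 - coordMonomial 3 3 0
  - coordMonomial 2 2 1 - coordMonomial 2 3 1 - coordMonomial 3 2 1 + coordMonomial 3 3 1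

lemma T₃_apply (x : Fin 3 → Fin 4 → ℝ) :
    T₃ x = (x 0 0 * (x 1 0 + x 1 1) + x 0 1 * (x 1 0 - x 1 1)) * (x 2 0 + x 2 1)
      + (x 0 2 * (x 1 2 + x 1 3) + x 0 3 * (x 1 2 - x 1 3)) * (x 2 0 - x 2 1) := by
  simp only [T₃, add_apply, sub_apply, coordMonomial_apply]
  ring

lemma supNorm_T₃_le : supNorm 3 4 T₃ ≤ 4 := by
  refine supNorm_le T₃ fun x hx => ?_
  have hxij (i : Fin 3) (j : Fin 4) : |x i j| ≤ 1 := (norm_le_pi_norm (x i) j).trans (hx i)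
  rw [T₃_apply, show (4 : ℝ) = 2 * 2 by norm_num]
  refine abs_mul_add_add_mul_sub_le ?_ ?_ (hxij 2 0) (hxij 2 1) <;>
    simpa using abs_mul_add_add_mul_sub_le (hxij 0 _) (hxij 0 _) (hxij 1 _) (hxij 1 _)

lemma abs_T₃_basis (a b c : Fin 4) :
    |T₃ ![e 4 a, e 4 b, e 4 c]| = if a / 2 = b / 2 ∧ c < 2 then 1 else 0 := by
  fin_cases a <;> fin_cases b <;> fin_cases c <;> simp [T₃_apply, e]

lemma mixedNorm3_T₃ {α β γ : ℝ} (hα : α ≠ 0) (hβ : β ≠ 0) (hγ : γ ≠ 0) :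
    mixedNorm3 α β γ T₃ = 2 ^ (2 / α + 1 / β + 1 / γ) := by
  have hβγ : β / γ ≠ 0 := div_ne_zero hβ hγ
  have inner (a b : Fin 4) : ∑ c : Fin 4, |T₃ ![e 4 a, e 4 b, e 4 c]| ^ γ =
      if a / 2 = b / 2 then 2 else 0 := by
    simp only [abs_T₃_basis, Fin.sum_univ_four]
    split_ifs <;> simp_all [Real.zero_rpow hγ]; norm_num
  have middle (a : Fin 4) : ∑ b : Fin 4, (∑ c : Fin 4, |T₃ ![e 4 a, e 4 b, e 4 c]| ^ γ) ^ (β / γ)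
      = 2 ^ (1 + β / γ) := by
    simp only [inner, Fin.sum_univ_four, Real.rpow_add two_pos, Real.rpow_one]
    fin_cases a <;> simp [Real.zero_rpow hβγ] <;> ring
  have h4 : (4 : ℝ) = 2 ^ (2 : ℝ) := by norm_num
  simp only [mixedNorm3, middle, sum_const, card_univ, Fintype.card_fin, nsmul_eq_mul]
  rw [Nat.cast_ofNat, h4, ← Real.rpow_mul zero_le_two, ← Real.rpow_add two_pos,
    ← Real.rpow_mul zero_le_two]
  congr 1
  field_simp
  ring

theorem stmt_14_general (α β γ : ℝ) (hα : α ∈ Set.Icc (1:ℝ) 2) (hβ : β ∈ Set.Icc (1:ℝ) 2)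
    (hγ : γ ∈ Set.Icc (1:ℝ) 2) (C : ℝ)
    (hC : ∀ n : ℕ, ∀ T : MultilinearMap ℝ (fun _ : Fin 3 => (Fin n → ℝ)) ℝ,
      (∑ j₁ : Fin n, (∑ j₂ : Fin n, (∑ j₃ : Fin n,
          |T ![e n j₁, e n j₂, e n j₃]| ^ γ) ^ (β / γ)) ^ (α / β)) ^ (1 / α)
        ≤ C * supNorm 3 n T) :
    (2:ℝ) ^ ((2*β*γ + α*β + α*γ - 2*α*β*γ) / (α*β*γ)) ≤ C := by
  have hα₀ : α ≠ 0 := (one_pos.trans_le hα.1).ne'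
  have hβ₀ : β ≠ 0 := (one_pos.trans_le hβ.1).ne'
  have hγ₀ : γ ≠ 0 := (one_pos.trans_le hγ.1).ne'
  have hE : (2*β*γ + α*β + α*γ - 2*α*β*γ) / (α*β*γ) = (2 / α + 1 / β + 1 / γ) - 2 := by
    field_simp
    ring
  have hT₃ : (2 : ℝ) ^ (2 / α + 1 / β + 1 / γ) ≤ C * supNorm 3 4 T₃ :=
    mixedNorm3_T₃ hα₀ hβ₀ hγ₀ ▸ hC 4 T₃
  have hC₀ : 0 ≤ C :=
    (pos_of_mul_pos_left ((Real.rpow_pos_of_pos two_pos _).trans_le hT₃)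
      (supNorm_nonneg T₃)).le
  rw [hE, Real.rpow_sub two_pos, div_le_iff₀ (by positivity)]
  calc (2 : ℝ) ^ (2 / α + 1 / β + 1 / γ) ≤ C * supNorm 3 4 T₃ := hT₃
    _ ≤ C * 4 := mul_le_mul_of_nonneg_left supNorm_T₃_le hC₀
    _ = C * 2 ^ (2 : ℝ) := by norm_num

/-- Trilinear lower bound: for `(α,β,γ) ∈ [1,2]³` with `1/α+1/β+1/γ = 2`, any
constant `C` in the mixed-norm trilinear inequality with exponents `(α,β,γ)`
satisfies `C ≥ 2^{(2βγ + αβ + αγ - 2αβγ)/(αβγ)}`. -/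
theorem stmt_14 (α β γ : ℝ) (hα : α ∈ Set.Icc (1:ℝ) 2) (hβ : β ∈ Set.Icc (1:ℝ) 2)
    (hγ : γ ∈ Set.Icc (1:ℝ) 2) (hsum : 1/α + 1/β + 1/γ = 2) (C : ℝ)
    (hC : ∀ n : ℕ, ∀ T : MultilinearMap ℝ (fun _ : Fin 3 => (Fin n → ℝ)) ℝ,
      (∑ j₁ : Fin n, (∑ j₂ : Fin n, (∑ j₃ : Fin n,
          |T ![e n j₁, e n j₂, e n j₃]| ^ γ) ^ (β / γ)) ^ (α / β)) ^ (1 / α)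
        ≤ C * supNorm 3 n T) :
    (2:ℝ) ^ ((2*β*γ + α*β + α*γ - 2*α*β*γ) / (α*β*γ)) ≤ C :=
  stmt_14_general α β γ hα hβ hγ C hC
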